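/- Let ℓ ∈ {3,4} and let q ≥ 2 be an integer. Suppose that for every J > 0 there are real numbers E, N > 0, positive integers K₁ ≤ K₂, and indices n₁ < n₂ ∈ ℕ which are both mild gap points for f_{ℓ,ℓ} with gap-length ≥ K₁ and K₁-tail-norm ≤ E, such that: (i) n₁ + K₁ < n₂ and n₂ + K₂ ≤ N; (ii) r_{ℓ,ℓ−1}(n) = 0 for all n with n₁ ≤ n < n₂ + K₂; (iii) there exists n₃ with n₁ ≤ n₃ < n₂ and r_{ℓ,ℓ}(n₃) > 0; (iv) q^{K₁} > J·E and q^{K₂} > J·N. Then θ_ℓ(q) is not a root of any nonzero polynomial with integer coefficients of degree at most ℓ. -/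

import Mathlib

/-- `r ℓ s n` is the number of `s`-tuples `(n₁,…,n_s) ∈ ℕ^s` with
`n₁^ℓ + ⋯ + n_s^ℓ = n`. -/
noncomputable def r (ℓ s n : ℕ) : ℕ := Nat.card {v : Fin s → ℕ // ∑ i, (v i) ^ ℓ = n}

/-- `n` is a mild gap point for the series with coefficients `a`, with
gap-length `≥ K` and `K`-tail-norm `≤ E`. -/
def IsMildGapPoint (a : ℕ → ℤ) (K : ℕ) (E : ℝ) (n : ℕ) : Prop :=
  (∀ k < K, a (n + k) = 0) ∧
    ∑' i : ℕ, |(a (n + K + i) : ℝ)| * (1 / 2 : ℝ) ^ i ≤ E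

open Finset Polynomial

/-! Write `x = 1/q` and multiply `P` by a power of `X` to get `Q` with `deg Q = ℓ` and
`Q(θ_ℓ(q)) = 0`. Expanding `θ_ℓ(q)^s = ∑ₙ r_{ℓ,s}(n) xⁿ` gives `0 = ∑ₙ aₙ xⁿ` with integers
`aₙ = ∑ₛ Q.coeff s · r_{ℓ,s}(n)` and `|aₙ| ≤ C · r_{ℓ,ℓ}(n)`, `C` the sum of the `|Q.coeff s|`.
At a mild gap point `m` the tail `∑_{n ≥ m} aₙ xⁿ` is at most `C E x^(m+K₁) < x^m` in absolute
value, while the head `∑_{n < m} aₙ xⁿ` lies in `x^m ℤ`, so the head vanishes. Doing this at `n₁`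
and at `n₂` gives `∑_{n₁ ≤ n < n₂} aₙ xⁿ = 0`. There `r_{ℓ,ℓ-1}` vanishes, so
`aₙ = lc(Q) · r_{ℓ,ℓ}(n)`, and the sum is positive because of the term `n = n₃`. -/

lemma hasSum_pi_prod {α : Type*} {f : α → ℝ} {a : ℝ} (hf₀ : 0 ≤ f) (hf : HasSum f a) (s : ℕ) :
    HasSum (fun v : Fin s → α => ∏ i, f (v i)) (a ^ s) := by
  induction s with
  | zero => simp
  | succ s ih =>
    have hg₀ : 0 ≤ fun v : Fin s → α => ∏ i, f (v i) := fun v => prod_nonneg fun i _ => hf₀ (v i)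
    have hsum := Summable.mul_of_nonneg hf.summable ih.summable hf₀ hg₀
    rw [pow_succ', ← (Fin.consEquiv fun _ : Fin (s + 1) => α).hasSum_iff]
    exact (hf.mul ih hsum).congr_fun fun p => by simp [Fin.prod_univ_succ, Fin.consEquiv]

lemma sum_range_eq_zero_of_abs_lt {a : ℕ → ℤ} {q m : ℕ} (hq : 0 < q)
    (h : |∑ k ∈ range m, (a k : ℝ) * (q : ℝ)⁻¹ ^ k| < (q : ℝ)⁻¹ ^ m) :
    ∑ k ∈ range m, (a k : ℝ) * (q : ℝ)⁻¹ ^ k = 0 := by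
  have hq' : (q : ℝ) ≠ 0 := by positivity
  have hcast : ((∑ k ∈ range m, a k * (q : ℤ) ^ (m - k) : ℤ) : ℝ)
      = (∑ k ∈ range m, (a k : ℝ) * (q : ℝ)⁻¹ ^ k) * (q : ℝ) ^ m := by
    push_cast
    rw [sum_mul]
    refine sum_congr rfl fun k hk => ?_
    rw [← Nat.sub_add_cancel (mem_range.1 hk).le, pow_add, Nat.add_sub_cancel, inv_pow]
    field_simp
  have hint : |((∑ k ∈ range m, a k * (q : ℤ) ^ (m - k) : ℤ) : ℝ)| < 1 := by
    rw [hcast, abs_mul, abs_of_pos (by positivity : (0 : ℝ) < (q : ℝ) ^ m)]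
    calc _ < (q : ℝ)⁻¹ ^ m * (q : ℝ) ^ m := by gcongr
      _ = 1 := by rw [inv_pow, inv_mul_cancel₀ (pow_ne_zero _ hq')]
  rw [← Int.cast_abs, ← Int.cast_one, Int.cast_lt, Int.abs_lt_one_iff] at hint
  simpa [hint, hq'] using hcast.symm

lemma summable_abs_mul_pow_of_le_half {b : ℕ → ℤ} {x : ℝ}
    (hb : Summable fun k => |(b k : ℝ)| * (1 / 2) ^ k) (hx₀ : 0 ≤ x) (hx : x ≤ 1 / 2) :
    Summable fun k => |(b k : ℝ)| * x ^ k :=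
  hb.of_nonneg_of_le (fun k => by positivity)
    fun k => mul_le_mul_of_nonneg_left (pow_le_pow_left₀ hx₀ hx k) (abs_nonneg _)

namespace IsMildGapPoint

variable {a b : ℕ → ℤ} {K m q : ℕ} {C E x : ℝ}

lemma tsum_abs_mul_pow_le (hgap : IsMildGapPoint b K E m)
    (hb : Summable fun k => |(b k : ℝ)| * (1 / 2) ^ k) (hx₀ : 0 ≤ x) (hx : x ≤ 1 / 2) :
    ∑' i, |(b (i + m) : ℝ)| * x ^ (i + m) ≤ E * x ^ (m + K) := by
  have hbm := (summable_nat_add_iff m).2 (summable_abs_mul_pow_of_le_half hb hx₀ hx)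
  have hnorm : Summable fun i => |(b (m + K + i) : ℝ)| * (1 / 2) ^ i := by
    refine (summable_mul_left_iff (a := ((1 : ℝ) / 2) ^ (m + K)) (by positivity)).1 ?_
    refine ((summable_nat_add_iff (m + K)).2 hb).congr fun i => ?_
    rw [add_comm i, pow_add]
    ring
  have hsplit := hbm.sum_add_tsum_nat_add K
  rw [sum_eq_zero fun i hi => by rw [add_comm i, hgap.1 i (mem_range.1 hi)]; simp,
    zero_add] at hsplit
  calc ∑' i, |(b (i + m) : ℝ)| * x ^ (i + m)
      = ∑' i, |(b (i + K + m) : ℝ)| * x ^ (i + K + m) := hsplit.symm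
    _ ≤ ∑' i, x ^ (m + K) * (|(b (m + K + i) : ℝ)| * (1 / 2) ^ i) := by
        refine ((summable_nat_add_iff K).2 hbm).tsum_le_tsum (fun i => ?_) (hnorm.mul_left _)
        rw [show i + K + m = m + K + i by omega, pow_add, mul_left_comm]
        gcongr
    _ = x ^ (m + K) * ∑' i, |(b (m + K + i) : ℝ)| * (1 / 2) ^ i := tsum_mul_left
    _ ≤ E * x ^ (m + K) := by
        rw [mul_comm E]
        exact mul_le_mul_of_nonneg_left hgap.2 (by positivity)

lemma abs_tsum_mul_pow_le (hgap : IsMildGapPoint b K E m) (hC : 0 ≤ C)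
    (hab : ∀ k, |(a k : ℝ)| ≤ C * |(b k : ℝ)|)
    (hb : Summable fun k => |(b k : ℝ)| * (1 / 2) ^ k) (hx₀ : 0 ≤ x) (hx : x ≤ 1 / 2) :
    |∑' i, (a (i + m) : ℝ) * x ^ (i + m)| ≤ C * E * x ^ (m + K) := by
  have hbm := (summable_nat_add_iff m).2 (summable_abs_mul_pow_of_le_half hb hx₀ hx)
  calc |∑' i, (a (i + m) : ℝ) * x ^ (i + m)|
      ≤ ∑' i, C * (|(b (i + m) : ℝ)| * x ^ (i + m)) :=
        tsum_of_norm_bounded (f := fun i => (a (i + m) : ℝ) * x ^ (i + m))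
          (hbm.mul_left C).hasSum fun i => by
          simpa [abs_mul, abs_of_nonneg hx₀, mul_assoc]
            using mul_le_mul_of_nonneg_right (hab (i + m)) (pow_nonneg hx₀ (i + m))
    _ = C * ∑' i, |(b (i + m) : ℝ)| * x ^ (i + m) := tsum_mul_left
    _ ≤ C * E * x ^ (m + K) := by
        rw [mul_assoc]
        exact mul_le_mul_of_nonneg_left (hgap.tsum_abs_mul_pow_le hb hx₀ hx) hC

lemma sum_range_mul_inv_pow_eq_zero (hgap : IsMildGapPoint b K E m) (hC : 0 ≤ C)
    (hab : ∀ k, |(a k : ℝ)| ≤ C * |(b k : ℝ)|) (hb : Summable fun k => |(b k : ℝ)| * (1 / 2) ^ k)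
    (hq : 2 ≤ q) (ha : HasSum (fun k => (a k : ℝ) * (q : ℝ)⁻¹ ^ k) 0) (hK : C * E < q ^ K) :
    ∑ k ∈ range m, (a k : ℝ) * (q : ℝ)⁻¹ ^ k = 0 := by
  have hq' : (2 : ℝ) ≤ q := by exact_mod_cast hq
  have hx : (q : ℝ)⁻¹ ≤ 1 / 2 := by rw [one_div]; exact inv_anti₀ two_pos hq'
  have hsplit := ha.summable.sum_add_tsum_nat_add m
  rw [ha.tsum_eq] at hsplit
  refine sum_range_eq_zero_of_abs_lt (by omega) ?_
  rw [eq_neg_of_add_eq_zero_left hsplit, abs_neg]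
  calc _ ≤ C * E * (q : ℝ)⁻¹ ^ (m + K) :=
        hgap.abs_tsum_mul_pow_le hC hab hb (by positivity) hx
    _ = C * E / (q : ℝ) ^ K * (q : ℝ)⁻¹ ^ m := by rw [pow_add, inv_pow (q : ℝ) K]; ring
    _ < 1 * (q : ℝ)⁻¹ ^ m := by gcongr; exact (div_lt_one (by positivity)).2 hK
    _ = (q : ℝ)⁻¹ ^ m := one_mul _

end IsMildGapPoint

section Representations

variable {ℓ : ℕ}

lemma finite_sum_pow_fiber (hℓ : ℓ ≠ 0) (s n : ℕ) :
    Finite {v : Fin s → ℕ // ∑ i, v i ^ ℓ = n} := by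
  refine Finite.of_injective (fun v i => (⟨v.1 i, Nat.lt_succ_of_le ?_⟩ : Fin (n + 1))) ?_
  · calc v.1 i ≤ v.1 i ^ ℓ := Nat.le_self_pow hℓ _
      _ ≤ ∑ j, v.1 j ^ ℓ := single_le_sum (fun j _ => Nat.zero_le (v.1 j ^ ℓ)) (mem_univ i)
      _ = n := v.2
  · intro v w h
    ext i
    exact congrArg Fin.val (congrFun h i)

lemma r_mono (hℓ : ℓ ≠ 0) (n : ℕ) : Monotone fun s => r ℓ s n := by
  refine monotone_nat_of_le_succ fun s => ?_
  have := finite_sum_pow_fiber hℓ (s + 1) n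
  refine Nat.card_le_card_of_injective (fun v => ⟨Fin.snoc v.1 0, ?_⟩) fun v w h => ?_
  · simp [Fin.sum_univ_castSucc, hℓ, v.2]
  · ext i
    simpa using congrFun (congrArg Subtype.val h) (Fin.castSucc i)

lemma hasSum_r_mul_pow (hℓ : ℓ ≠ 0) {x : ℝ} (hx₀ : 0 ≤ x) (hx₁ : x < 1) (s : ℕ) :
    HasSum (fun n => (r ℓ s n : ℝ) * x ^ n) ((∑' n : ℕ, x ^ n ^ ℓ) ^ s) := by
  have hθ : Summable fun n : ℕ => x ^ n ^ ℓ :=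
    (summable_geometric_of_lt_one hx₀ hx₁).of_nonneg_of_le (fun n => pow_nonneg hx₀ _)
      fun n => pow_le_pow_of_le_one hx₀ hx₁.le (Nat.le_self_pow hℓ n)
  have hpi := (hasSum_pi_prod (fun n => pow_nonneg hx₀ _) hθ.hasSum s).tsum_fiberwise
    fun v => ∑ i, v i ^ ℓ
  refine hpi.congr_fun fun n => ?_
  calc (r ℓ s n : ℝ) * x ^ n = ∑' _ : {v : Fin s → ℕ // ∑ i, v i ^ ℓ = n}, x ^ n := by
        rw [tsum_const, nsmul_eq_mul, r]
    _ = _ := tsum_congr fun v => by rw [prod_pow_eq_pow_sum, v.2]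

end Representations

lemma Polynomial.exists_natDegree_eq_of_aeval_eq_zero {R A : Type*} [CommRing R] [IsDomain R]
    [Semiring A] [Algebra R A] {P : R[X]} {θ : A} {d : ℕ} (hP : P ≠ 0) (hd : P.natDegree ≤ d)
    (hθ : aeval θ P = 0) : ∃ Q : R[X], Q ≠ 0 ∧ Q.natDegree = d ∧ aeval θ Q = 0 :=
  ⟨X ^ (d - P.natDegree) * P, mul_ne_zero (pow_ne_zero _ X_ne_zero) hP,
    by rw [natDegree_X_pow_mul _ hP]; omega, by simp [hθ]⟩

def sumAbsCoeff (Q : ℤ[X]) : ℤ := ∑ s ∈ range (Q.natDegree + 1), |Q.coeff s|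

lemma sumAbsCoeff_pos {Q : ℤ[X]} (hQ : Q ≠ 0) : 0 < sumAbsCoeff Q :=
  (abs_pos.2 (leadingCoeff_ne_zero.2 hQ)).trans_le <|
    single_le_sum (fun s _ => abs_nonneg (Q.coeff s)) (self_mem_range_succ _)

/-- The `n`-th coefficient of the power series `Q(f_{ℓ,1}) = ∑ₛ Q.coeff s • f_{ℓ,s}`. -/
noncomputable def polyThetaCoeff (ℓ : ℕ) (Q : ℤ[X]) (n : ℕ) : ℤ :=
  ∑ s ∈ range (Q.natDegree + 1), Q.coeff s * r ℓ s n

section PolyThetaCoeff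

variable {ℓ : ℕ} {Q : ℤ[X]}

lemma hasSum_polyThetaCoeff (hℓ : ℓ ≠ 0) {x : ℝ} (hx₀ : 0 ≤ x) (hx₁ : x < 1) (Q : ℤ[X]) :
    HasSum (fun n => (polyThetaCoeff ℓ Q n : ℝ) * x ^ n) (aeval (∑' n : ℕ, x ^ n ^ ℓ) Q) := by
  simp only [aeval_eq_sum_range, zsmul_eq_mul]
  refine (hasSum_sum fun s _ => (hasSum_r_mul_pow hℓ hx₀ hx₁ s).mul_left (Q.coeff s : ℝ)).congr_fun
    fun n => ?_
  simp [polyThetaCoeff, sum_mul, mul_assoc]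

lemma abs_polyThetaCoeff_le (hℓ : ℓ ≠ 0) (hQ : Q.natDegree ≤ ℓ) (n : ℕ) :
    |polyThetaCoeff ℓ Q n| ≤ sumAbsCoeff Q * r ℓ ℓ n := by
  rw [sumAbsCoeff, sum_mul]
  refine (abs_sum_le_sum_abs _ _).trans (sum_le_sum fun s hs => ?_)
  rw [abs_mul, Nat.abs_cast]
  gcongr
  exact r_mono hℓ n (by have := mem_range.1 hs; omega)

lemma polyThetaCoeff_eq_leadingCoeff_mul (hℓ : ℓ ≠ 0) (hQ : Q.natDegree = ℓ) {n : ℕ}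
    (hn : r ℓ (ℓ - 1) n = 0) : polyThetaCoeff ℓ Q n = Q.leadingCoeff * r ℓ ℓ n := by
  rw [polyThetaCoeff, leadingCoeff, hQ, sum_range_succ, add_eq_right]
  refine sum_eq_zero fun s hs => ?_
  have hzero : r ℓ s n = 0 :=
    Nat.eq_zero_of_le_zero <| hn ▸ r_mono hℓ n (by have := mem_range.1 hs; omega)
  simp [hzero]

lemma sum_range_polyThetaCoeff_eq_zero (hℓ : ℓ ≠ 0) {q K m : ℕ} {E : ℝ} (hq : 2 ≤ q)
    (hQ : Q.natDegree ≤ ℓ) (hroot : aeval (∑' n : ℕ, (q : ℝ)⁻¹ ^ n ^ ℓ) Q = 0)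
    (hgap : IsMildGapPoint (fun n => (r ℓ ℓ n : ℤ)) K E m) (hK : sumAbsCoeff Q * E < q ^ K) :
    ∑ k ∈ range m, (polyThetaCoeff ℓ Q k : ℝ) * (q : ℝ)⁻¹ ^ k = 0 := by
  have hsum := hasSum_polyThetaCoeff hℓ (x := (q : ℝ)⁻¹) (by positivity)
    (inv_lt_one_of_one_lt₀ (by exact_mod_cast hq)) Q
  have hb := (hasSum_r_mul_pow hℓ (x := 1 / 2) (by norm_num) (by norm_num) ℓ).summable
  exact hgap.sum_range_mul_inv_pow_eq_zero (Int.cast_nonneg (sum_nonneg fun s _ => abs_nonneg _))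
    (fun k => by exact_mod_cast abs_polyThetaCoeff_le hℓ hQ k) (by simpa using hb) hq
    (hroot ▸ hsum) hK

end PolyThetaCoeff

/-- Criterion: nested mild gaps for `f_{ℓ,ℓ}` inside a gap of the
representations by `ℓ-1` powers force `θ_ℓ(q)` not to be a root of any
nonzero integer polynomial of degree at most `ℓ`. -/
theorem not_root_of_nested_gaps (ℓ : ℕ) (hℓ : ℓ = 3 ∨ ℓ = 4)
    (q : ℕ) (hq : 2 ≤ q)
    (hyp : ∀ J : ℝ, 0 < J →
      ∃ E N : ℝ, 0 < E ∧ 0 < N ∧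
      ∃ K₁ K₂ : ℕ, 0 < K₁ ∧ K₁ ≤ K₂ ∧
      ∃ n₁ n₂ : ℕ, n₁ < n₂ ∧
        IsMildGapPoint (fun n => (r ℓ ℓ n : ℤ)) K₁ E n₁ ∧
        IsMildGapPoint (fun n => (r ℓ ℓ n : ℤ)) K₁ E n₂ ∧
        (n₁ + K₁ < n₂ ∧ ((n₂ + K₂ : ℕ) : ℝ) ≤ N) ∧
        (∀ n : ℕ, n₁ ≤ n → n < n₂ + K₂ → r ℓ (ℓ - 1) n = 0) ∧
        (∃ n₃ : ℕ, n₁ ≤ n₃ ∧ n₃ < n₂ ∧ 0 < r ℓ ℓ n₃) ∧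
        ((q : ℝ) ^ K₁ > J * E ∧ (q : ℝ) ^ K₂ > J * N)) :
    ∀ P : Polynomial ℤ, P ≠ 0 → P.natDegree ≤ ℓ →
      Polynomial.aeval (∑' n : ℕ, (1 : ℝ) / (q : ℝ) ^ (n ^ ℓ)) P ≠ 0 := by
  intro P hP hdeg hroot
  have hℓ₀ : ℓ ≠ 0 := by omega
  obtain ⟨Q, hQ₀, hQℓ, hQroot⟩ := exists_natDegree_eq_of_aeval_eq_zero hP hdeg hroot
  have hθ : ∑' n : ℕ, (1 : ℝ) / (q : ℝ) ^ (n ^ ℓ) = ∑' n : ℕ, (q : ℝ)⁻¹ ^ n ^ ℓ := by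
    simp [inv_pow]
  rw [hθ] at hQroot
  obtain ⟨E, _, -, -, K, _, -, -, n₁, n₂, hn, g₁, g₂, -, hvan, ⟨n₃, h₁₃, h₃₂, hr₃⟩, hK, -⟩ :=
    hyp (sumAbsCoeff Q) (by exact_mod_cast sumAbsCoeff_pos hQ₀)
  have hmid := sum_Ico_eq_sub (fun k => (polyThetaCoeff ℓ Q k : ℝ) * (q : ℝ)⁻¹ ^ k) hn.le
  rw [sum_range_polyThetaCoeff_eq_zero hℓ₀ hq hQℓ.le hQroot g₂ hK,
    sum_range_polyThetaCoeff_eq_zero hℓ₀ hq hQℓ.le hQroot g₁ hK, sub_zero,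
    sum_congr rfl fun k hk => by
      rw [polyThetaCoeff_eq_leadingCoeff_mul hℓ₀ hQℓ (hvan k (mem_Ico.1 hk).1 (by grind))]] at hmid
  push_cast at hmid
  simp_rw [mul_assoc, ← mul_sum] at hmid
  have hpos : 0 < ∑ k ∈ Ico n₁ n₂, (r ℓ ℓ k : ℝ) * (q : ℝ)⁻¹ ^ k :=
    sum_pos' (fun k _ => by positivity)
      ⟨n₃, mem_Ico.2 ⟨h₁₃, h₃₂⟩, mul_pos (by exact_mod_cast hr₃) (by positivity)⟩
  exact mul_ne_zero (by exact_mod_cast leadingCoeff_ne_zero.2 hQ₀) hpos.ne' hmid
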